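/- arXiv:2203.13146 — 2 statements merged into one kernel-verified Lean document; each statement's English description precedes it below -/
import Mathlib

section
/- Regularization of gas marginal costs preserves approximate optimality: Let α > 1, β > 0, x^max > 0, m = |E|, and for each edge e let β_e ≥ β* > 0. Define f_e(x) = β_e·x·|x| with cost F_e(x) = β_e·|x|³/3, and the regularized versions f̃_e(x) = β_e·x·|x| + ζ·x with cost F̃_e(x) = β_e·|x|³/3 + ζ·x²/2, where 0 < ζ ≤ 2·√((α − 1)·β·β*/(m·x^max)). Let b ∈ ℝ^V be balanced, let x* be a minimizer of ∑_{e∈E} F_e(x_e) subject to Γx = b, let x̃ be a minimizer of ∑_{e∈E} F̃_e(x_e) subject to Γx = b, and assume |x*_e| ≤ x^max and |x̃_e| ≤ x^max for all e. Then ∑_{e∈E} F_e(x̃_e) ≤ α·∑_{e∈E} F_e(x*_e) + β. -/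
open Matrix

set_option maxHeartbeats 1600000

/-- Regularization of gas marginal costs preserves approximate optimality. -/
theorem gas_regularization_preserves_approximation
    {V E : Type*} [Fintype V] [Fintype E] [DecidableEq V]
    (t h : E → V) (hth : ∀ e, h e ≠ t e)
    (Γ : Matrix V E ℝ)
    (hΓ : ∀ v e, Γ v e = if v = h e then 1 else if v = t e then -1 else 0)
    (α β xmax βstar : ℝ)
    (hα : 1 < α) (hβ : 0 < β) (hxmax : 0 < xmax) (hβstar : 0 < βstar)
    (βe : E → ℝ) (hβe : ∀ e, βstar ≤ βe e)
    (ζ : ℝ) (hζ0 : 0 < ζ)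
    (hζ : ζ ≤ 2 * Real.sqrt ((α - 1) * β * βstar / ((Fintype.card E : ℝ) * xmax)))
    (b : V → ℝ) (hb : ∑ v, b v = 0)
    (xstar xt : E → ℝ)
    (hxsfeas : Γ *ᵥ xstar = b)
    (hxsmin : ∀ y : E → ℝ, Γ *ᵥ y = b →
      ∑ e, βe e * |xstar e| ^ 3 / 3 ≤ ∑ e, βe e * |y e| ^ 3 / 3)
    (hxtfeas : Γ *ᵥ xt = b)
    (hxtmin : ∀ y : E → ℝ, Γ *ᵥ y = b →
      ∑ e, (βe e * |xt e| ^ 3 / 3 + ζ * xt e ^ 2 / 2)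
        ≤ ∑ e, (βe e * |y e| ^ 3 / 3 + ζ * y e ^ 2 / 2))
    (hbds : ∀ e, |xstar e| ≤ xmax) (hbdt : ∀ e, |xt e| ≤ xmax) :
    ∑ e, βe e * |xt e| ^ 3 / 3 ≤ α * ∑ e, βe e * |xstar e| ^ 3 / 3 + β := by
  rcases isEmpty_or_nonempty E with hE | hE
  · simp only [Finset.univ_eq_empty, Finset.sum_empty]
    nlinarith
  · have hm : (0:ℝ) < (Fintype.card E : ℝ) := by
      exact_mod_cast Fintype.card_pos
    set m : ℝ := (Fintype.card E : ℝ) with hmdef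
    set c : ℝ := β / (m * xmax) with hcdef
    have hc0 : 0 < c := by positivity
    set u : ℝ := (α - 1) * βstar with hudef
    have hu0 : 0 < u := by nlinarith
    set s : ℝ := Real.sqrt ((α - 1) * β * βstar / (m * xmax)) with hsdef
    have hs0 : 0 ≤ s := Real.sqrt_nonneg _
    have hm0 : m ≠ 0 := hm.ne'
    have hxmax0 : xmax ≠ 0 := hxmax.ne'
    clear_value s u c m
    have hsc : s = Real.sqrt u * Real.sqrt c := by
      rw [← Real.sqrt_mul hu0.le, hsdef]
      congr 1
      rw [hudef, hcdef]
      field_simp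
    have hs2 : s ^ 2 = u * c := by
      rw [hsc, mul_pow, Real.sq_sqrt hu0.le, Real.sq_sqrt hc0.le]
    -- per-edge bound
    have per : ∀ e, ζ * xstar e ^ 2 / 2 ≤
        (α - 1) * (βe e * |xstar e| ^ 3 / 3) + β / m := by
      intro e
      set x : ℝ := |xstar e| with hxdef
      have hx0 : 0 ≤ x := abs_nonneg _
      have hxm : x ≤ xmax := hbds e
      have hx2 : xstar e ^ 2 = x ^ 2 := (sq_abs _).symm
      have hx3 : |xstar e| ^ 3 = x ^ 3 := by rw [hxdef]
      clear_value x
      have h1 : s * x ≤ u * x ^ 2 / 3 + 3 * c / 4 := by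
        nlinarith [sq_nonneg (2 * Real.sqrt u * x - 3 * Real.sqrt c),
          Real.sq_sqrt hu0.le, Real.sq_sqrt hc0.le,
          Real.sqrt_nonneg u, Real.sqrt_nonneg c]
      have h2 : s * x ^ 2 ≤ u * x ^ 3 / 3 + 3 * c * x / 4 := by
        nlinarith [mul_le_mul_of_nonneg_left h1 hx0]
      have h3 : ζ * x ^ 2 / 2 ≤ s * x ^ 2 := by
        nlinarith [sq_nonneg x]
      have h4 : u * x ^ 3 ≤ (α - 1) * (βe e * x ^ 3) := by
        have : βstar * x ^ 3 ≤ βe e * x ^ 3 :=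
          mul_le_mul_of_nonneg_right (hβe e) (by positivity)
        rw [hudef]
        nlinarith
      have h5 : 3 * c * x / 4 ≤ β / m := by
        have : c * x ≤ c * xmax := mul_le_mul_of_nonneg_left hxm hc0.le
        have hcx : c * xmax = β / m := by
          rw [hcdef]; field_simp
        nlinarith
      rw [hx2]
      nlinarith
    -- sum of per-edge bounds
    have hsum : ∑ e, ζ * xstar e ^ 2 / 2 ≤
        (α - 1) * ∑ e, βe e * |xstar e| ^ 3 / 3 + β := by
      calc ∑ e, ζ * xstar e ^ 2 / 2
          ≤ ∑ e : E, ((α - 1) * (βe e * |xstar e| ^ 3 / 3) + β / m) :=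
            Finset.sum_le_sum fun e _ => per e
        _ = (α - 1) * ∑ e, βe e * |xstar e| ^ 3 / 3 + β := by
            rw [Finset.sum_add_distrib, ← Finset.mul_sum, Finset.sum_const,
              Finset.card_univ, nsmul_eq_mul]
            have : (Fintype.card E : ℝ) * (β / m) = β := by
              rw [← hmdef]; field_simp
            rw [this]
    have key := hxtmin xstar hxsfeas
    rw [Finset.sum_add_distrib, Finset.sum_add_distrib] at key
    have hnn : (0:ℝ) ≤ ∑ e, ζ * xt e ^ 2 / 2 :=
      Finset.sum_nonneg fun e _ => by positivity
    have hring : (α - 1) * (∑ e, βe e * |xstar e| ^ 3 / 3)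
        = α * (∑ e, βe e * |xstar e| ^ 3 / 3) - ∑ e, βe e * |xstar e| ^ 3 / 3 := by
      ring
    linarith [key, hsum, hnn, hring]
end

section
/- Pointwise bound for the gas regularization: Let α > 1, β > 0, β* > 0, x^max > 0, let m be a positive natural number, and let β_e ≥ β*. If 0 ≤ ζ ≤ 2·√((α − 1)·β·β*/(m·x^max)), then for every x ∈ ℝ one has ζ·|x| ≤ (α − 1)·β_e·x² + β/(m·x^max); equivalently, with f_e(x) = β_e·x·|x| and f̃_e(x) = β_e·x·|x| + ζ·x, the bound |f̃_e(x) − f_e(x)| ≤ (α − 1)·|f_e(x)| + β/(m·x^max) holds for all x ∈ ℝ. -/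
/-- Pointwise bound for the gas regularization. -/
theorem gas_regularization_pointwise_bound
    (α β βstar xmax : ℝ) (m : ℕ) (hm : 0 < m)
    (hα : 1 < α) (hβ : 0 < β) (hβstar : 0 < βstar) (hxmax : 0 < xmax)
    (βe : ℝ) (hβe : βstar ≤ βe)
    (ζ : ℝ) (hζ0 : 0 ≤ ζ)
    (hζ : ζ ≤ 2 * Real.sqrt ((α - 1) * β * βstar / ((m : ℝ) * xmax))) :
    ∀ x : ℝ,
      ζ * |x| ≤ (α - 1) * βe * x ^ 2 + β / ((m : ℝ) * xmax) ∧
      abs ((βe * x * |x| + ζ * x) - βe * x * |x|)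
        ≤ (α - 1) * abs (βe * x * |x|) + β / ((m : ℝ) * xmax) := by
  intro x
  have hM : 0 < (m : ℝ) * xmax := by positivity
  have hβe' : 0 < βe := lt_of_lt_of_le hβstar hβe
  have hA : 0 < (α - 1) * βe := by nlinarith
  have hs : 0 ≤ (α - 1) * β * βstar / ((m : ℝ) * xmax) :=
    div_nonneg (mul_nonneg (mul_nonneg (by linarith) hβ.le) hβstar.le) hM.le
  have h1 : ζ ^ 2 ≤ 4 * ((α - 1) * β * βstar / ((m : ℝ) * xmax)) := by
    nlinarith [Real.sq_sqrt hs, Real.sqrt_nonneg ((α - 1) * β * βstar / ((m : ℝ) * xmax))]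
  have h2 : ζ ^ 2 ≤ 4 * ((α - 1) * βe) * (β / ((m : ℝ) * xmax)) := by
    have : (α - 1) * β * βstar / ((m : ℝ) * xmax) ≤ ((α - 1) * βe) * (β / ((m : ℝ) * xmax)) := by
      rw [div_le_iff₀ hM]
      field_simp
      nlinarith [mul_nonneg (mul_nonneg (by linarith : (0:ℝ) ≤ α - 1) hβ.le) (sub_nonneg.2 hβe)]
    nlinarith
  have hC : 0 < β / ((m : ℝ) * xmax) := by positivity
  have amgm : ∀ A C t : ℝ, 0 < A → 0 < C → 0 ≤ t → ζ ^ 2 ≤ 4 * A * C →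
      ζ * t ≤ A * t ^ 2 + C := by
    intro A C t hA hC ht h
    nlinarith [sq_nonneg (2 * A * t - ζ), mul_pos hA hC]
  have key : ζ * |x| ≤ (α - 1) * βe * x ^ 2 + β / ((m : ℝ) * xmax) := by
    have := amgm ((α - 1) * βe) (β / ((m : ℝ) * xmax)) |x| hA hC (abs_nonneg x)
      (by linarith [h2])
    rwa [sq_abs] at this
  refine ⟨key, ?_⟩
  have e1 : abs ((βe * x * |x| + ζ * x) - βe * x * |x|) = ζ * |x| := by
    rw [add_sub_cancel_left, abs_mul, abs_of_nonneg hζ0]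
  have e2 : abs (βe * x * |x|) = βe * x ^ 2 := by
    rw [abs_mul, abs_abs, abs_mul, abs_of_pos hβe', mul_assoc, abs_mul_abs_self]
    ring
  rw [e1, e2]
  calc ζ * |x| ≤ (α - 1) * βe * x ^ 2 + β / ((m : ℝ) * xmax) := key
    _ = (α - 1) * (βe * x ^ 2) + β / ((m : ℝ) * xmax) := by ring
end
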